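/- Let p ∈ OFS be trim with |p| > 1. Then f(p) > max(p). Moreover, if R(p) is not trim, then f(p) = 2·p_1. -/

import Mathlib

/-- `OFS p`: `p` is a strictly increasing nonempty finite sequence of positive integers. -/
def OFS (p : List ℕ) : Prop := p ≠ [] ∧ p.Pairwise (· < ·) ∧ ∀ x ∈ p, 0 < x

/-- The reduction operation `R`. -/
def R : List ℕ → List ℕ
  | [] => []
  | [a] => [a]
  | a :: b :: rest => (((b :: rest).map (fun x => x - a)).insert a).mergeSort (· ≤ ·)

/-- `max(p)` -/
def maxL (p : List ℕ) : ℕ := p.foldr max 0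

/-- `gcd(p)` -/
def gcdL (p : List ℕ) : ℕ := p.foldr Nat.gcd 0

/-- Fuel-based auxiliary for `f`; `maxL p + 1` fuel always suffices since
`maxL` strictly decreases under `R` for lists of length `> 1`. -/
def faux : ℕ → List ℕ → ℕ
  | _, [] => 0
  | _, [a] => a
  | 0, _ => 0
  | fuel+1, p => p.headI + faux fuel (R p)

/-- The function `f` of Castelli–Mignosi–Restivo: `f p = p₁` if `|p| = 1`,
and `f p = p₁ + f (R p)` otherwise. -/
def f (p : List ℕ) : ℕ := faux (maxL p + 1) p

/-- The function `fw` of Tijdeman–Zamboni. -/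
def fw (p : List ℕ) : ℕ :=
  if h : 1 < p.length ∧ gcdL p.dropLast = gcdL p ∧ f p.dropLast ≤ maxL p
  then fw p.dropLast
  else f p
termination_by p.length
decreasing_by
  simp only [List.length_dropLast]
  omega

/-- The Fine–Wilf graph `G(p,k)` on vertex set `{1,…,k}` (represented by `Fin k`,
with `v : Fin k` standing for the integer `v+1`); `i` and `j` are adjacent iff
`|i - j|` is an entry of `p`. -/
def G (p : List ℕ) (k : ℕ) : SimpleGraph (Fin k) where
  Adj i j := i ≠ j ∧ (((j : ℕ) - (i : ℕ)) ∈ p ∨ ((i : ℕ) - (j : ℕ)) ∈ p)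
  symm := by
    constructor
    intro i j h
    exact ⟨h.1.symm, h.2.symm⟩
  loopless := by
    constructor
    intro i h
    exact h.1 rfl

/-- `p` is trim. -/
def Trim (p : List ℕ) : Prop :=
  p.length = 1 ∨ (1 < p.length ∧
    (gcdL p ≠ gcdL p.dropLast ∨ (gcdL p = gcdL p.dropLast ∧ maxL p < f p.dropLast)))


-- basic maxL lemmas
lemma maxL_cons (a : ℕ) (l : List ℕ) : maxL (a :: l) = max a (maxL l) := rfl

lemma le_maxL {x : ℕ} {l : List ℕ} (h : x ∈ l) : x ≤ maxL l := by
  induction l with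
  | nil => simp at h
  | cons b t ih =>
    rcases List.mem_cons.mp h with rfl | h'
    · simp [maxL_cons]
    · simp [maxL_cons]; exact Or.inr (ih h')

lemma maxL_mem {l : List ℕ} (h : l ≠ []) : maxL l ∈ l := by
  induction l with
  | nil => simp at h
  | cons b t ih =>
    rcases eq_or_ne t [] with rfl | ht'
    · simp [maxL]
    · rw [maxL_cons]
      rcases le_total b (maxL t) with h1 | h1
      · rw [max_eq_right h1]; exact List.mem_cons_of_mem _ (ih ht')
      · rw [max_eq_left h1]; exact List.mem_cons_self

-- gcdL lemmas
lemma gcdL_dvd {x : ℕ} {l : List ℕ} (h : x ∈ l) : gcdL l ∣ x := by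
  induction l with
  | nil => simp at h
  | cons b t ih =>
    rcases List.mem_cons.mp h with rfl | h'
    · exact Nat.gcd_dvd_left _ _
    · exact (Nat.gcd_dvd_right b (gcdL t)).trans (ih h')

lemma dvd_gcdL {d : ℕ} {l : List ℕ} (h : ∀ x ∈ l, d ∣ x) : d ∣ gcdL l := by
  induction l with
  | nil => simp [gcdL]
  | cons b t ih =>
    exact Nat.dvd_gcd (h b (by simp)) (ih fun x hx => h x (List.mem_cons_of_mem _ hx))

lemma gcdL_congr {l l' : List ℕ} (h : ∀ x, x ∈ l ↔ x ∈ l') : gcdL l = gcdL l' :=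
  Nat.dvd_antisymm (dvd_gcdL fun x hx => gcdL_dvd ((h x).mpr hx))
    (dvd_gcdL fun x hx => gcdL_dvd ((h x).mp hx))

-- sorted ext
instance : IsAntisymm ℕ (· < ·) := ⟨fun a b h1 h2 => absurd h2 (Nat.lt_asymm h1)⟩

lemma sortedlt_ext {l l' : List ℕ} (h : l.Pairwise (· < ·)) (h' : l'.Pairwise (· < ·))
    (hm : ∀ x, x ∈ l ↔ x ∈ l') : l = l' :=
  List.Perm.eq_of_pairwise (fun a b _ _ h1 h2 => absurd h2 (Nat.lt_asymm h1)) h h' ((List.perm_ext_iff_of_nodup h.nodup h'.nodup).mpr hm)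

-- R structure
lemma mem_R {a b : ℕ} {t : List ℕ} {x : ℕ} :
    x ∈ R (a :: b :: t) ↔ x = a ∨ ∃ y ∈ b :: t, x = y - a := by
  simp only [R, List.mem_mergeSort, List.mem_insert_iff, List.mem_map]
  constructor
  · rintro (rfl | ⟨y, hy, rfl⟩)
    · exact Or.inl rfl
    · exact Or.inr ⟨y, hy, rfl⟩
  · rintro (rfl | ⟨y, hy, rfl⟩)
    · exact Or.inl rfl
    · exact Or.inr ⟨y, hy, rfl⟩

lemma sorted_R {a b : ℕ} {t : List ℕ} (h : (a :: b :: t).Pairwise (· < ·)) :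
    (R (a :: b :: t)).Pairwise (· < ·) := by
  have hnd : (((b :: t).map (fun x => x - a)).insert a).Nodup := by
    apply List.Nodup.insert
    apply List.Nodup.map_on _ (h.nodup.sublist (List.sublist_cons_self _ _))
    · intro x hx y hy hxy
      have hax : a < x := (List.pairwise_cons.mp h).1 x hx
      have hay : a < y := (List.pairwise_cons.mp h).1 y hy
      omega
  have hperm := List.mergeSort_perm (((b :: t).map (fun x => x - a)).insert a) (fun a b => a ≤ b)
  have hnd2 : (R (a :: b :: t)).Nodup := by
    rw [R]; exact hperm.nodup_iff.mpr hnd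
  refine ((?_ : (R (a :: b :: t)).Pairwise (· ≤ ·)).and hnd2).imp fun h => lt_of_le_of_ne h.1 h.2
  rw [R]
  have := List.pairwise_mergeSort (le := fun x y : ℕ => decide (x ≤ y))
    (fun x y z hxy hyz => by simp_all; omega) (fun x y => by simp; omega)
    (((b :: t).map (fun x => x - a)).insert a)
  simpa using this

-- convenience: decompose OFS with length > 1
lemma ofs_shape {p : List ℕ} (hp : OFS p) (hl : 1 < p.length) :
    ∃ a b t, p = a :: b :: t := by
  match p with
  | [] => simp at hl
  | [a] => simp at hl
  | a :: b :: t => exact ⟨a, b, t, rfl⟩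

lemma ofs_cons {a b : ℕ} {t : List ℕ} (hp : OFS (a :: b :: t)) :
    0 < a ∧ (∀ x ∈ b :: t, a < x) ∧ (b :: t).Pairwise (· < ·) := by
  obtain ⟨-, hs, hpos⟩ := hp
  rw [List.pairwise_cons] at hs
  exact ⟨hpos a (by simp), hs.1, hs.2⟩

lemma ofs_R {a b : ℕ} {t : List ℕ} (hp : OFS (a :: b :: t)) : OFS (R (a :: b :: t)) := by
  obtain ⟨ha, hlt, hs⟩ := ofs_cons hp
  refine ⟨?_, sorted_R hp.2.1, ?_⟩
  · intro h
    have : a ∈ R (a :: b :: t) := mem_R.mpr (Or.inl rfl)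
    simp [h] at this
  · intro x hx
    rcases mem_R.mp hx with rfl | ⟨y, hy, rfl⟩
    · exact ha
    · have := hlt y hy; omega

lemma mem_R_self {a b : ℕ} {t : List ℕ} : a ∈ R (a :: b :: t) := mem_R.mpr (Or.inl rfl)

lemma maxL_cons_of_lt {a : ℕ} {t : List ℕ} (ht : t ≠ []) (h : ∀ x ∈ t, a < x) :
    maxL (a :: t) = maxL t := by
  have := h _ (maxL_mem ht)
  rw [maxL_cons]; omega

lemma maxL_R {a b : ℕ} {t : List ℕ} (hp : OFS (a :: b :: t)) :
    maxL (R (a :: b :: t)) = max (maxL (a :: b :: t) - a) a := by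
  obtain ⟨ha, hlt, hs⟩ := ofs_cons hp
  have hM : maxL (a :: b :: t) = maxL (b :: t) := maxL_cons_of_lt (by simp) hlt
  rw [hM]
  apply Nat.le_antisymm
  · apply Nat.le_of_lt_succ
    have h1 : ∀ x ∈ R (a :: b :: t), x ≤ max (maxL (b :: t) - a) a := by
      intro x hx
      rcases mem_R.mp hx with rfl | ⟨y, hy, rfl⟩
      · omega
      · have := le_maxL hy; have := hlt y hy; omega
    have := h1 _ (maxL_mem (by
      intro h; have : a ∈ R (a :: b :: t) := mem_R_self; simp [h] at this))
    omega
  · have h1 : a ≤ maxL (R (a :: b :: t)) := le_maxL mem_R_self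
    have h2 : maxL (b :: t) - a ≤ maxL (R (a :: b :: t)) :=
      le_maxL (mem_R.mpr (Or.inr ⟨maxL (b :: t), maxL_mem (by simp), rfl⟩))
    omega

lemma gcdL_R {a b : ℕ} {t : List ℕ} (hp : OFS (a :: b :: t)) :
    gcdL (R (a :: b :: t)) = gcdL (a :: b :: t) := by
  obtain ⟨ha, hlt, hs⟩ := ofs_cons hp
  apply Nat.dvd_antisymm
  · apply dvd_gcdL
    intro x hx
    rcases List.mem_cons.mp hx with rfl | hx'
    · exact gcdL_dvd mem_R_self
    · have h1 : gcdL (R (a :: b :: t)) ∣ x - a :=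
        gcdL_dvd (mem_R.mpr (Or.inr ⟨x, hx', rfl⟩))
      have h2 : gcdL (R (a :: b :: t)) ∣ a := gcdL_dvd mem_R_self
      have h3 : a ≤ x := le_of_lt (hlt x hx')
      have : x = (x - a) + a := by omega
      rw [this]; exact Nat.dvd_add h1 h2
  · apply dvd_gcdL
    intro x hx
    rcases mem_R.mp hx with rfl | ⟨y, hy, rfl⟩
    · exact gcdL_dvd (by simp)
    · exact Nat.dvd_sub (gcdL_dvd (List.mem_cons_of_mem _ hy)) (gcdL_dvd (by simp))

lemma f_singleton (a : ℕ) : f [a] = a := rfl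

lemma maxL_R_lt {a b : ℕ} {t : List ℕ} (hp : OFS (a :: b :: t)) :
    maxL (R (a :: b :: t)) < maxL (a :: b :: t) := by
  obtain ⟨ha, hlt, hs⟩ := ofs_cons hp
  have hb : a < maxL (a :: b :: t) := by
    have := le_maxL (show b ∈ a :: b :: t by simp); have := hlt b (by simp); omega
  rw [maxL_R hp]; omega

lemma faux_congr : ∀ n : ℕ, ∀ m p, OFS p → maxL p < n → maxL p < m → faux n p = faux m p := by
  intro n
  induction n using Nat.strong_induction_on with
  | _ n ih =>
    intro m p hp hn hm
    match p, m, n with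
    | [], _, _ => cases hp.1 rfl
    | [a], m, n =>
      match m, n with
      | 0, _ => simp [maxL, f] at hm
      | _, 0 => simp [maxL, f] at hn
      | m+1, n+1 => rfl
    | a :: b :: t, m, n =>
      match m, n with
      | 0, _ => omega
      | _, 0 => omega
      | m+1, n+1 =>
        show (a :: b :: t).headI + faux n (R (a :: b :: t))
            = (a :: b :: t).headI + faux m (R (a :: b :: t))
        have hRlt := maxL_R_lt hp
        rw [ih n (by omega) m _ (ofs_R hp) (by omega) (by omega)]

lemma f_cons {a b : ℕ} {t : List ℕ} (hp : OFS (a :: b :: t)) :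
    f (a :: b :: t) = a + f (R (a :: b :: t)) := by
  have hRlt := maxL_R_lt hp
  show faux (maxL (a :: b :: t) + 1) (a :: b :: t) = _
  have h1 : faux (maxL (a :: b :: t) + 1) (a :: b :: t)
      = (a :: b :: t).headI + faux (maxL (a :: b :: t)) (R (a :: b :: t)) := by
    have hM : 0 < maxL (a :: b :: t) := by
      have := le_maxL (show b ∈ a :: b :: t by simp)
      have := (ofs_cons hp).2.1 b (by simp); have := (ofs_cons hp).1; omega
    obtain ⟨M, hMe⟩ : ∃ M, maxL (a :: b :: t) = M + 1 := ⟨_, (Nat.succ_pred_eq_of_pos hM).symm⟩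
    rw [hMe]; rfl
  rw [h1]
  congr 1
  exact faux_congr _ _ _ (ofs_R hp) (by omega) (by omega)

lemma f_ge_maxL : ∀ N p, maxL p ≤ N → OFS p → maxL p ≤ f p := by
  intro N
  induction N using Nat.strong_induction_on with
  | _ N ih =>
    intro p hN hp
    match p with
    | [] => cases hp.1 rfl
    | [a] => simp [f_singleton, maxL]
    | a :: b :: t =>
      rw [f_cons hp]
      have hR := maxL_R_lt hp
      have h1 := ih (maxL (R (a :: b :: t))) (by omega) (R (a :: b :: t)) le_rfl (ofs_R hp)
      rw [maxL_R hp] at h1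
      omega

lemma f_ge_max {p : List ℕ} (hp : OFS p) : maxL p ≤ f p := f_ge_maxL _ p le_rfl hp

lemma f_ge_two_head {a b : ℕ} {t : List ℕ} (hp : OFS (a :: b :: t)) :
    2 * a ≤ f (a :: b :: t) := by
  rw [f_cons hp]
  have h1 : a ≤ maxL (R (a :: b :: t)) := le_maxL mem_R_self
  have h2 := f_ge_max (ofs_R hp)
  omega

-- t = t.dropLast ++ [maxL t] for sorted nonempty t
lemma sorted_dropLast_maxL {t : List ℕ} (hs : t.Pairwise (· < ·)) (ht : t ≠ []) :
    t = t.dropLast ++ [maxL t] := by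
  have hgl : t.getLast ht = maxL t := by
    apply Nat.le_antisymm (le_maxL (List.getLast_mem ht))
    have h2 : ∀ x ∈ t, x ≤ t.getLast ht := by
      intro x hx
      rw [← List.dropLast_append_getLast ht, List.mem_append] at hx
      rcases hx with h | h
      · have := List.pairwise_append.mp (by rw [List.dropLast_append_getLast ht]; exact hs)
        exact le_of_lt (this.2.2 x h _ (by simp))
      · simp at h; omega
    exact h2 _ (maxL_mem ht)
  conv_lhs => rw [← List.dropLast_append_getLast ht]
  rw [hgl]

lemma mem_dropLast_lt_maxL {t : List ℕ} (hs : t.Pairwise (· < ·)) (ht : t ≠ [])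
    {x : ℕ} (hx : x ∈ t.dropLast) : x < maxL t := by
  have := List.pairwise_append.mp (by rw [← sorted_dropLast_maxL hs ht]; exact hs)
  exact this.2.2 x hx _ (by simp)

lemma maxL_cons_cons {a b : ℕ} {t : List ℕ} (hp : OFS (a :: b :: t)) :
    maxL (a :: b :: t) = maxL (b :: t) :=
  maxL_cons_of_lt (by simp) (ofs_cons hp).2.1

lemma ofs_dropLast {a b : ℕ} {t : List ℕ} (hp : OFS (a :: b :: t)) (ht : t ≠ []) :
    OFS ((a :: b :: t).dropLast) := by
  refine ⟨by simp, hp.2.1.sublist (List.dropLast_sublist _), ?_⟩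
  intro x hx
  exact hp.2.2 x ((List.dropLast_sublist _).mem hx)

lemma R_eq_append {a b : ℕ} {t : List ℕ} (hp : OFS (a :: b :: t))
    (h : 2 * a < maxL (a :: b :: t)) :
    R (a :: b :: t) = R ((a :: b :: t).dropLast) ++ [maxL (a :: b :: t) - a] := by
  obtain ⟨ha, hlt, hs⟩ := ofs_cons hp
  have hM : maxL (a :: b :: t) = maxL (b :: t) := maxL_cons_cons hp
  match t with
  | [] =>
    have hMb : maxL (a :: b :: ([] : List ℕ)) = b := by
      have := hlt b (by simp); simp [maxL]; omega
    rw [hMb] at h ⊢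
    show R [a, b] = R [a] ++ [b - a]
    have hra : R [a] = [a] := rfl
    rw [hra]
    apply sortedlt_ext (sorted_R hp.2.1)
    · show List.Pairwise (· < ·) [a, b - a]
      refine List.pairwise_cons.mpr ⟨?_, by simp⟩
      intro y hy; simp at hy; omega
    · intro x
      rw [mem_R]
      simp
  | c :: t' =>
    rw [hM] at h ⊢
    have hq : (a :: b :: c :: t').dropLast = a :: b :: (c :: t').dropLast := rfl
    rw [hq]
    have hdec : b :: c :: t' = (b :: c :: t').dropLast ++ [maxL (b :: c :: t')] :=
      sorted_dropLast_maxL hs (by simp)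
    have hqofs : OFS (a :: b :: (c :: t').dropLast) := by
      rw [← hq]; exact ofs_dropLast hp (by simp)
    apply sortedlt_ext (sorted_R hp.2.1)
    · apply List.pairwise_append.mpr
      refine ⟨sorted_R hqofs.2.1, by simp, ?_⟩
      intro x hx y hy
      simp at hy; subst hy
      rcases mem_R.mp hx with rfl | ⟨y, hy, rfl⟩
      · omega
      · have h1 : y < maxL (b :: c :: t') :=
          mem_dropLast_lt_maxL hs (by simp) hy
        have h2 : a < y := hlt y (by rw [hdec]; exact List.mem_append_left _ hy)
        omega
    · intro x
      rw [mem_R]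
      simp only [List.mem_append, mem_R, List.mem_singleton]
      constructor
      · rintro (rfl | ⟨y, hy, rfl⟩)
        · exact Or.inl (Or.inl rfl)
        · rw [hdec, List.mem_append] at hy
          rcases hy with hy | hy
          · exact Or.inl (Or.inr ⟨y, hy, rfl⟩)
          · simp at hy; subst hy; exact Or.inr rfl
      · rintro ((rfl | ⟨y, hy, rfl⟩) | rfl)
        · exact Or.inl rfl
        · exact Or.inr ⟨y, by rw [hdec]; exact List.mem_append_left _ hy, rfl⟩
        · exact Or.inr ⟨maxL (b :: c :: t'), maxL_mem (by simp), rfl⟩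

lemma R_eq_dropLast {a b : ℕ} {t : List ℕ} (hp : OFS (a :: b :: t)) (ht : t ≠ [])
    (h : maxL (a :: b :: t) = 2 * a) :
    R (a :: b :: t) = R ((a :: b :: t).dropLast) := by
  obtain ⟨c, t', rfl⟩ := List.exists_cons_of_ne_nil ht
  obtain ⟨ha, hlt, hs⟩ := ofs_cons hp
  have hM : maxL (a :: b :: c :: t') = maxL (b :: c :: t') := maxL_cons_cons hp
  rw [hM] at h
  have hq : (a :: b :: c :: t').dropLast = a :: b :: (c :: t').dropLast := rfl
  rw [hq]
  have hdec : b :: c :: t' = (b :: c :: t').dropLast ++ [maxL (b :: c :: t')] :=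
    sorted_dropLast_maxL hs (by simp)
  have hqofs : OFS (a :: b :: (c :: t').dropLast) := by
    rw [← hq]; exact ofs_dropLast hp (by simp)
  apply sortedlt_ext (sorted_R hp.2.1) (sorted_R hqofs.2.1)
  intro x
  rw [mem_R, mem_R]
  constructor
  · rintro (rfl | ⟨y, hy, rfl⟩)
    · exact Or.inl rfl
    · rw [hdec, List.mem_append] at hy
      rcases hy with hy | hy
      · exact Or.inr ⟨y, hy, rfl⟩
      · simp at hy; subst hy
        have : maxL (b :: c :: t') - a = a := by omega
        rw [this]; exact Or.inl rfl
  · rintro (rfl | ⟨y, hy, rfl⟩)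
    · exact Or.inl rfl
    · exact Or.inr ⟨y, by rw [hdec]; exact List.mem_append_left _ hy, rfl⟩

lemma gcdL_singleton (a : ℕ) : gcdL [a] = a := by simp [gcdL]

lemma key : ∀ N p, maxL p ≤ N → OFS p → 1 < p.length →
    (f p = maxL p ↔ (gcdL p = gcdL p.dropLast ∧ f p.dropLast ≤ maxL p)) := by
  intro N
  induction N using Nat.strong_induction_on with
  | _ N ih =>
    intro p hN hp hl
    obtain ⟨a, b, t, rfl⟩ := ofs_shape hp hl
    obtain ⟨ha, hlt, hs⟩ := ofs_cons hp
    set M := maxL (a :: b :: t) with hMdef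
    have hab : a < b := hlt b (by simp)
    have hbM : b ≤ M := le_maxL (by simp)
    have hfc : f (a :: b :: t) = a + f (R (a :: b :: t)) := f_cons hp
    have hRofs := ofs_R hp
    have hmaxR : maxL (R (a :: b :: t)) = max (M - a) a := maxL_R hp
    have hfRge : maxL (R (a :: b :: t)) ≤ f (R (a :: b :: t)) := f_ge_max hRofs
    have hRltM : maxL (R (a :: b :: t)) < M := maxL_R_lt hp
    match t with
    | [] =>
      -- p = [a, b], M = b
      have hMb : M = b := by simp [hMdef, maxL]; omega
      have hdq : (([a, b] : List ℕ)).dropLast = [a] := rfl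
      rw [hdq, gcdL_singleton, f_singleton]
      have hgcd : gcdL [a, b] = Nat.gcd a b := by simp [gcdL]
      rcases lt_trichotomy b (2 * a) with hb2 | hb2 | hb2
      · -- b < 2a : both sides false
        constructor
        · intro hL; exfalso; rw [hmaxR] at hfRge; omega
        · rintro ⟨hg, -⟩; exfalso
          rw [hgcd] at hg
          have : a ∣ b := hg ▸ Nat.gcd_dvd_right a b
          rcases this with ⟨k, rfl⟩
          match k with
          | 0 => omega
          | 1 => omega
          | k + 2 => have : a * (k + 2) = a * k + 2 * a := by ring
                     omega
      · -- b = 2a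
        have hRa : R [a, b] = [a] := by
          apply sortedlt_ext (sorted_R hp.2.1) (by simp)
          intro x; rw [mem_R]; simp; omega
        rw [hRa, f_singleton] at hfc
        constructor
        · intro _; refine ⟨?_, by omega⟩
          rw [hgcd]; subst hb2; simp [Nat.gcd_mul_left_right]
        · intro _; omega
      · -- b > 2a
        have hMb' : maxL [a, b] = b := by rw [← hMdef]; exact hMb
        have hRe : R [a, b] = [a, b - a] := by
          have := R_eq_append hp (by rw [hMb']; omega)
          rw [hdq, hMb'] at this
          rw [show R [a] = [a] from rfl] at this
          simpa using this
        have hmRe : maxL [a, b - a] = b - a := by simp [maxL]; omega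
        have hIH := ih (maxL (R ([a, b] : List ℕ))) (by omega) (R [a, b]) le_rfl hRofs
          (by rw [hRe]; simp)
        rw [hRe] at hIH hfc
        rw [hmRe] at hIH
        have hIH := hIH
        have hdq2 : (([a, b - a] : List ℕ)).dropLast = [a] := rfl
        rw [hdq2, gcdL_singleton, f_singleton] at hIH
        have hgR : gcdL [a, b - a] = gcdL [a, b] := by
          have := gcdL_R hp; rwa [hRe] at this
        constructor
        · intro hL
          have hfR : f [a, b - a] = b - a := by omega
          obtain ⟨hg, -⟩ := hIH.mp hfR
          exact ⟨by rw [← hgR, hg], by omega⟩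
        · rintro ⟨hg, -⟩
          have hfR : f [a, b - a] = b - a := hIH.mpr ⟨by rw [hgR, hg], by omega⟩
          omega
    | c :: t'' =>
      -- length ≥ 3
      have hq : (a :: b :: c :: t'').dropLast = a :: b :: (c :: t'').dropLast := rfl
      have hqofs : OFS ((a :: b :: c :: t'').dropLast) := ofs_dropLast hp (by simp)
      rw [hq] at hqofs
      have hfq : f (a :: b :: (c :: t'').dropLast)
          = a + f (R (a :: b :: (c :: t'').dropLast)) := f_cons hqofs
      have hfq2a : 2 * a ≤ f (a :: b :: (c :: t'').dropLast) := f_ge_two_head hqofs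
      have hgq : gcdL (R (a :: b :: (c :: t'').dropLast))
          = gcdL (a :: b :: (c :: t'').dropLast) := gcdL_R hqofs
      have hgp : gcdL (R (a :: b :: c :: t'')) = gcdL (a :: b :: c :: t'') := gcdL_R hp
      rw [hq]
      rcases lt_trichotomy M (2 * a) with hM2 | hM2 | hM2
      · -- M < 2a : both sides false
        constructor
        · intro hL; exfalso; rw [hmaxR] at hfRge; omega
        · rintro ⟨-, hf⟩; exfalso; omega
      · -- M = 2a
        have hRq : R (a :: b :: c :: t'') = R (a :: b :: (c :: t'').dropLast) := by
          have := R_eq_dropLast hp (by simp) (by rw [← hMdef]; exact hM2)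
          rwa [hq] at this
        rw [hRq] at hfc hgp
        have hfeq : f (a :: b :: c :: t'') = f (a :: b :: (c :: t'').dropLast) := by omega
        have hge : M ≤ f (a :: b :: c :: t'') := by rw [hMdef]; exact f_ge_max hp
        constructor
        · intro hL
          exact ⟨by rw [← hgp, hgq], by omega⟩
        · rintro ⟨-, hf⟩; omega
      · -- M > 2a
        have hRe : R (a :: b :: c :: t'')
            = R (a :: b :: (c :: t'').dropLast) ++ [M - a] := by
          have := R_eq_append hp (by rw [← hMdef]; omega)
          rw [hq, ← hMdef] at this
          exact this
        have hmR : maxL (R (a :: b :: c :: t'')) = M - a := by rw [hmaxR]; omega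
        have hRqne : R (a :: b :: (c :: t'').dropLast) ≠ [] := (ofs_R hqofs).1
        have hlen : 1 < (R (a :: b :: c :: t'')).length := by
          rw [hRe, List.length_append]
          have : 0 < (R (a :: b :: (c :: t'').dropLast)).length :=
            List.length_pos_iff.mpr hRqne
          simp; omega
        have hIH := ih (maxL (R (a :: b :: c :: t''))) (by omega)
          (R (a :: b :: c :: t'')) le_rfl hRofs hlen
        have hdL : (R (a :: b :: c :: t'')).dropLast = R (a :: b :: (c :: t'').dropLast) := by
          rw [hRe]; exact List.dropLast_concat ..
        rw [hdL, hmR] at hIH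
        constructor
        · intro hL
          have hfR : f (R (a :: b :: c :: t'')) = M - a := by omega
          obtain ⟨hg, hf⟩ := hIH.mp hfR
          refine ⟨by rw [← hgp, hg, hgq], by omega⟩
        · rintro ⟨hg, hf⟩
          have hfR : f (R (a :: b :: c :: t'')) = M - a :=
            hIH.mpr ⟨by rw [hgp, hg, ← hgq], by omega⟩
          omega


theorem trim_f_gt_max (p : List ℕ) (hp : OFS p) (ht : Trim p) (hl : 1 < p.length) :
    maxL p < f p ∧ (¬ Trim (R p) → f p = 2 * p.headI) := by
  obtain ⟨a, b, t, rfl⟩ := ofs_shape hp hl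
  obtain ⟨ha, hlt, hs⟩ := ofs_cons hp
  have hab : a < b := hlt b (by simp)
  have hbM : b ≤ maxL (a :: b :: t) := le_maxL (by simp)
  have hkey := key (maxL (a :: b :: t)) _ le_rfl hp hl
  have hnR : ¬(gcdL (a :: b :: t) = gcdL (a :: b :: t).dropLast ∧
      f (a :: b :: t).dropLast ≤ maxL (a :: b :: t)) := by
    rcases ht with h1 | ⟨-, h2 | ⟨h2, h3⟩⟩
    · simp at h1
    · rintro ⟨hg, -⟩; exact h2 hg
    · rintro ⟨-, hf⟩; omega
  have hne : f (a :: b :: t) ≠ maxL (a :: b :: t) := fun h => hnR (hkey.mp h)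
  have hge := f_ge_max hp
  have part1 : maxL (a :: b :: t) < f (a :: b :: t) := lt_of_le_of_ne hge (Ne.symm hne)
  refine ⟨part1, ?_⟩
  intro hnt
  have hRofs := ofs_R hp
  have hlen : 1 < (R (a :: b :: t)).length := by
    rcases Nat.lt_or_ge 1 (R (a :: b :: t)).length with h | h
    · exact h
    · exfalso; apply hnt; left
      have hne0 : (R (a :: b :: t)).length ≠ 0 := by
        intro h0; exact hRofs.1 (List.length_eq_zero_iff.mp h0)
      omega
  have hRHS : gcdL (R (a :: b :: t)) = gcdL (R (a :: b :: t)).dropLast ∧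
      f (R (a :: b :: t)).dropLast ≤ maxL (R (a :: b :: t)) := by
    have hg : gcdL (R (a :: b :: t)) = gcdL (R (a :: b :: t)).dropLast := by
      by_contra hg; exact hnt (Or.inr ⟨hlen, Or.inl hg⟩)
    refine ⟨hg, ?_⟩
    by_contra hf; push_neg at hf
    exact hnt (Or.inr ⟨hlen, Or.inr ⟨hg, hf⟩⟩)
  have hfR := (key (maxL (R (a :: b :: t))) (R (a :: b :: t)) le_rfl hRofs hlen).mpr hRHS
  have hmaxR := maxL_R hp
  have hfc := f_cons hp
  have hale : maxL (a :: b :: t) - a ≤ a := by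
    by_contra hcon; push_neg at hcon
    have : f (a :: b :: t) = maxL (a :: b :: t) := by
      rw [hfc, hfR, hmaxR]; omega
    omega
  have hma : maxL (R (a :: b :: t)) = a := by rw [hmaxR]; omega
  rw [hfc, hfR, hma]
  show a + a = 2 * a
  omega
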